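/- The skew-symmetric bilinear bracket on ℝ⁷ determined on the standard basis by [e₁,e₃] = −e₅, [e₂,e₄] = e₅, [e₁,e₄] = −e₆, [e₂,e₃] = −e₆, [e₇,eᵢ] = (1/2)eᵢ for i = 1,2,3,4, [e₇,e₅] = e₅, [e₇,e₆] = e₆, with all other brackets of basis vectors equal to zero, satisfies the Jacobi identity, and the resulting 7-dimensional Lie algebra 𝔰 is solvable. -/
import Mathlib


noncomputable section

/-- The bracket of the solvable Lie algebra `𝔰 = 𝔫₂₈ ⊕_D ℝe₇` on `ℝ⁷` (0-based indices). -/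
def br7 (x y : Fin 7 → ℝ) : Fin 7 → ℝ :=
  ![(1 / 2) * (x 6 * y 0 - x 0 * y 6),
    (1 / 2) * (x 6 * y 1 - x 1 * y 6),
    (1 / 2) * (x 6 * y 2 - x 2 * y 6),
    (1 / 2) * (x 6 * y 3 - x 3 * y 6),
    -(x 0 * y 2 - x 2 * y 0) + (x 1 * y 3 - x 3 * y 1) + (x 6 * y 4 - x 4 * y 6),
    -(x 0 * y 3 - x 3 * y 0) - (x 1 * y 2 - x 2 * y 1) + (x 6 * y 5 - x 5 * y 6),
    0]

/-- The standard basis vector `eᵢ` of `ℝ⁷` (0-based). -/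
def e7v (i : Fin 7) : Fin 7 → ℝ := Pi.single i 1

lemma brm0 (x y : Fin 7 → ℝ) (h : 0 < 7) : br7 x y ⟨0, h⟩ = (1 / 2) * (x 6 * y 0 - x 0 * y 6) := rfl
lemma brm1 (x y : Fin 7 → ℝ) (h : 1 < 7) : br7 x y ⟨1, h⟩ = (1 / 2) * (x 6 * y 1 - x 1 * y 6) := rfl
lemma brm2 (x y : Fin 7 → ℝ) (h : 2 < 7) : br7 x y ⟨2, h⟩ = (1 / 2) * (x 6 * y 2 - x 2 * y 6) := rfl
lemma brm3 (x y : Fin 7 → ℝ) (h : 3 < 7) : br7 x y ⟨3, h⟩ = (1 / 2) * (x 6 * y 3 - x 3 * y 6) := rfl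
lemma brm4 (x y : Fin 7 → ℝ) (h : 4 < 7) : br7 x y ⟨4, h⟩ =
    -(x 0 * y 2 - x 2 * y 0) + (x 1 * y 3 - x 3 * y 1) + (x 6 * y 4 - x 4 * y 6) := rfl
lemma brm5 (x y : Fin 7 → ℝ) (h : 5 < 7) : br7 x y ⟨5, h⟩ =
    -(x 0 * y 3 - x 3 * y 0) - (x 1 * y 2 - x 2 * y 1) + (x 6 * y 5 - x 5 * y 6) := rfl
lemma brm6 (x y : Fin 7 → ℝ) (h : 6 < 7) : br7 x y ⟨6, h⟩ = 0 := rfl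
lemma brc0 (x y : Fin 7 → ℝ) : br7 x y 0 = (1 / 2) * (x 6 * y 0 - x 0 * y 6) := rfl
lemma brc1 (x y : Fin 7 → ℝ) : br7 x y 1 = (1 / 2) * (x 6 * y 1 - x 1 * y 6) := rfl
lemma brc2 (x y : Fin 7 → ℝ) : br7 x y 2 = (1 / 2) * (x 6 * y 2 - x 2 * y 6) := rfl
lemma brc3 (x y : Fin 7 → ℝ) : br7 x y 3 = (1 / 2) * (x 6 * y 3 - x 3 * y 6) := rfl
lemma brc4 (x y : Fin 7 → ℝ) : br7 x y 4 =
    -(x 0 * y 2 - x 2 * y 0) + (x 1 * y 3 - x 3 * y 1) + (x 6 * y 4 - x 4 * y 6) := rfl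
lemma brc5 (x y : Fin 7 → ℝ) : br7 x y 5 =
    -(x 0 * y 3 - x 3 * y 0) - (x 1 * y 2 - x 2 * y 1) + (x 6 * y 5 - x 5 * y 6) := rfl
lemma brc6 (x y : Fin 7 → ℝ) : br7 x y 6 = 0 := rfl

lemma fv0 : ((0 : Fin 7) : ℕ) = 0 := rfl
lemma fv1 : ((1 : Fin 7) : ℕ) = 1 := rfl
lemma fv2 : ((2 : Fin 7) : ℕ) = 2 := rfl
lemma fv3 : ((3 : Fin 7) : ℕ) = 3 := rfl
lemma fv4 : ((4 : Fin 7) : ℕ) = 4 := rfl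
lemma fv5 : ((5 : Fin 7) : ℕ) = 5 := rfl
lemma fv6 : ((6 : Fin 7) : ℕ) = 6 := rfl

/-- Any bracket of two brackets vanishes in coordinates 0,1,2,3,6, since the 6th coordinate
of any bracket is zero. -/
lemma br7_depth2_low (c d c' d' : Fin 7 → ℝ) :
    br7 (br7 c d) (br7 c' d') 0 = 0 ∧ br7 (br7 c d) (br7 c' d') 1 = 0 ∧
    br7 (br7 c d) (br7 c' d') 2 = 0 ∧ br7 (br7 c d) (br7 c' d') 3 = 0 ∧
    br7 (br7 c d) (br7 c' d') 6 = 0 := by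
  refine ⟨?_, ?_, ?_, ?_, brc6 _ _⟩ <;>
    simp only [brc0, brc1, brc2, brc3, brc6] <;> ring

/-- If both arguments vanish in coordinates 0,1,2,3,6, the bracket is zero. -/
lemma br7_zero_of_low_zero (x y : Fin 7 → ℝ)
    (hx0 : x 0 = 0) (hx1 : x 1 = 0) (hx2 : x 2 = 0) (hx3 : x 3 = 0) (hx6 : x 6 = 0)
    (hy0 : y 0 = 0) (hy1 : y 1 = 0) (hy2 : y 2 = 0) (hy3 : y 3 = 0) (hy6 : y 6 = 0) :
    br7 x y = 0 := by
  funext i; fin_cases i <;>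
    simp only [brm0, brm1, brm2, brm3, brm4, brm5, brm6, hx0, hx1, hx2, hx3, hx6,
      hy0, hy1, hy2, hy3, hy6, Pi.zero_apply] <;> ring

set_option maxHeartbeats 1600000 in
/-- The bracket on `ℝ⁷` determined on the standard basis by `[e₁,e₃] = −e₅`, `[e₂,e₄] = e₅`,
`[e₁,e₄] = −e₆`, `[e₂,e₃] = −e₆`, `[e₇,eᵢ] = (1/2)eᵢ` for `i = 1,2,3,4`, `[e₇,e₅] = e₅`,
`[e₇,e₆] = e₆` (all other basis brackets zero) is bilinear and skew-symmetric, satisfies the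
Jacobi identity, and the resulting 7-dimensional Lie algebra `𝔰` is solvable: its derived
series terminates at zero (here after three steps). -/
theorem s7_lie_algebra_solvable :
    -- bilinearity
    (∀ x x' y, br7 (x + x') y = br7 x y + br7 x' y) ∧
    (∀ (c : ℝ) x y, br7 (c • x) y = c • br7 x y) ∧
    (∀ x y y', br7 x (y + y') = br7 x y + br7 x y') ∧
    (∀ (c : ℝ) x y, br7 x (c • y) = c • br7 x y) ∧
    -- skew-symmetry
    (∀ x y, br7 x y = -br7 y x) ∧
    -- values on the standard basis
    (br7 (e7v 0) (e7v 2) = -e7v 4) ∧ (br7 (e7v 1) (e7v 3) = e7v 4) ∧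
    (br7 (e7v 0) (e7v 3) = -e7v 5) ∧ (br7 (e7v 1) (e7v 2) = -e7v 5) ∧
    (∀ i : Fin 7, (i : ℕ) < 4 → br7 (e7v 6) (e7v i) = (1 / 2 : ℝ) • e7v i) ∧
    (br7 (e7v 6) (e7v 4) = e7v 4) ∧ (br7 (e7v 6) (e7v 5) = e7v 5) ∧
    (∀ i j : Fin 7,
      (i, j) ∉ ({(0, 2), (2, 0), (1, 3), (3, 1), (0, 3), (3, 0), (1, 2), (2, 1),
          (6, 0), (0, 6), (6, 1), (1, 6), (6, 2), (2, 6), (6, 3), (3, 6),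
          (6, 4), (4, 6), (6, 5), (5, 6)} : Set (Fin 7 × Fin 7)) →
        br7 (e7v i) (e7v j) = 0) ∧
    -- Jacobi identity
    (∀ x y z, br7 (br7 x y) z + br7 (br7 y z) x + br7 (br7 z x) y = 0) ∧
    -- solvability: the third term of the derived series vanishes
    (∀ a b c d a' b' c' d' : Fin 7 → ℝ,
      br7 (br7 (br7 a b) (br7 c d)) (br7 (br7 a' b') (br7 c' d')) = 0) := by
  refine ⟨?_, ?_, ?_, ?_, ?_, ?_, ?_, ?_, ?_, ?_, ?_, ?_, ?_, ?_, ?_⟩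
  · intro x x' y; funext i; fin_cases i <;>
      simp only [brm0, brm1, brm2, brm3, brm4, brm5, brm6, Pi.add_apply] <;> ring
  · intro c x y; funext i; fin_cases i <;>
      simp only [brm0, brm1, brm2, brm3, brm4, brm5, brm6, Pi.smul_apply, smul_eq_mul] <;> ring
  · intro x y y'; funext i; fin_cases i <;>
      simp only [brm0, brm1, brm2, brm3, brm4, brm5, brm6, Pi.add_apply] <;> ring
  · intro c x y; funext i; fin_cases i <;>
      simp only [brm0, brm1, brm2, brm3, brm4, brm5, brm6, Pi.smul_apply, smul_eq_mul] <;> ring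
  · intro x y; funext i; fin_cases i <;>
      simp only [brm0, brm1, brm2, brm3, brm4, brm5, brm6, Pi.neg_apply] <;> ring
  · funext i; fin_cases i <;>
      simp only [brm0, brm1, brm2, brm3, brm4, brm5, brm6, Pi.neg_apply] <;>
      norm_num [e7v, Pi.single_apply, Fin.ext_iff, fv0, fv1, fv2, fv3, fv4, fv5, fv6]
  · funext i; fin_cases i <;>
      simp only [brm0, brm1, brm2, brm3, brm4, brm5, brm6] <;>
      norm_num [e7v, Pi.single_apply, Fin.ext_iff, fv0, fv1, fv2, fv3, fv4, fv5, fv6]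
  · funext i; fin_cases i <;>
      simp only [brm0, brm1, brm2, brm3, brm4, brm5, brm6, Pi.neg_apply] <;>
      norm_num [e7v, Pi.single_apply, Fin.ext_iff, fv0, fv1, fv2, fv3, fv4, fv5, fv6]
  · funext i; fin_cases i <;>
      simp only [brm0, brm1, brm2, brm3, brm4, brm5, brm6, Pi.neg_apply] <;>
      norm_num [e7v, Pi.single_apply, Fin.ext_iff, fv0, fv1, fv2, fv3, fv4, fv5, fv6]
  · intro i hi
    fin_cases i <;>
      first
        | (funext k; fin_cases k <;>
            simp only [brm0, brm1, brm2, brm3, brm4, brm5, brm6, Pi.smul_apply, smul_eq_mul] <;>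
            norm_num [e7v, Pi.single_apply, Fin.ext_iff, fv0, fv1, fv2, fv3, fv4, fv5, fv6] <;>
            done)
        | exact absurd hi (by norm_num)
  · funext i; fin_cases i <;>
      simp only [brm0, brm1, brm2, brm3, brm4, brm5, brm6] <;>
      norm_num [e7v, Pi.single_apply, Fin.ext_iff, fv0, fv1, fv2, fv3, fv4, fv5, fv6]
  · funext i; fin_cases i <;>
      simp only [brm0, brm1, brm2, brm3, brm4, brm5, brm6] <;>
      norm_num [e7v, Pi.single_apply, Fin.ext_iff, fv0, fv1, fv2, fv3, fv4, fv5, fv6]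
  · intro i j hij
    fin_cases i <;> fin_cases j <;>
      first
        | (funext k; fin_cases k <;>
            simp only [brm0, brm1, brm2, brm3, brm4, brm5, brm6, Pi.zero_apply] <;>
            norm_num [e7v, Pi.single_apply, Fin.ext_iff, fv0, fv1, fv2, fv3, fv4, fv5, fv6] <;>
            done)
        | exact absurd
            (by simp only [Set.mem_insert_iff, Set.mem_singleton_iff]; decide) hij
  · intro x y z; funext i; fin_cases i <;>
      simp only [brm0, brm1, brm2, brm3, brm4, brm5, brm6, brc0, brc1, brc2, brc3, brc4,
        brc5, brc6, Pi.add_apply, Pi.zero_apply] <;> ring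
  · intro a b c d a' b' c' d'
    obtain ⟨h0, h1, h2, h3, h6⟩ := br7_depth2_low a b c d
    obtain ⟨h0', h1', h2', h3', h6'⟩ := br7_depth2_low a' b' c' d'
    exact br7_zero_of_low_zero _ _ h0 h1 h2 h3 h6 h0' h1' h2' h3' h6'

end
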